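/- Let S² = {s ∈ ℝ³ : |s| = 1} with its standard surface measure dσ, let R ⊆ ℝ³ be a measurable set with the Lebesgue measure, and D = R × S² with the product measure. Let k : R × [−1,1] → ℝ and σ_t : R → ℝ be measurable, set σ_s(r) = ∫_{S²} k(r, s·s') dσ(s') and σ_a = σ_t − σ_s, and assume 0 ≤ k(r,μ) ≤ k̄ for all r,μ and 0 < σ̲_a ≤ σ_a(r) ≤ σ̄_a for all r. Define the collision operator (Cφ)(r,s) = σ_t(r)φ(r,s) − ∫_{S²} k(r, s·s') φ(r,s') dσ(s'). Then for every φ ∈ L²(D): Cφ ∈ L²(D) and ∫_D (Cφ)(r,s) φ(r,s) d(r,s) ≥ σ̲_a ∫_D |φ(r,s)|² d(r,s). -/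

import Mathlib

/-!
Writing `Kφ(r, s) = ∫ k(r, s·s') φ(r, s') dσ(s')`, the pointwise inequality
`2 k φ(s) φ(s') ≤ k (φ(s)² + φ(s')²)` for `k ≥ 0`, integrated over `S² × S²` and combined with the
symmetry of `k(r, s·s')` in `(s, s')`, gives `∫ (Kφ) φ ≤ ∫ σ_s φ²` on every fibre `{r} × S²`.
Hence `∫ (Cφ) φ ≥ ∫ (σ_t - σ_s) φ² ≥ σ̲_a ‖φ‖²`. That `Cφ ∈ L²` follows from
`|Kφ(r, s)| ≤ k̄ ‖φ(r, ·)‖_{L¹} ≤ k̄ |S²|^{1/2} ‖φ(r, ·)‖_{L²}` and the boundedness of `σ_t`.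
-/

open MeasureTheory
open scoped RealInnerProductSpace

noncomputable abbrev E3 : Type := EuclideanSpace ℝ (Fin 3)
abbrev Sph : Type := Metric.sphere (0 : E3) 1

/-- The standard surface measure on the unit sphere S² ⊂ ℝ³. -/
noncomputable def sphMeasure : Measure Sph := (volume : Measure E3).toSphere

open Function Set
open scoped ENNReal

variable {β : Type*} [MeasurableSpace β] {ν : Measure β}

theorem sq_integral_abs_le_measureReal_univ_mul [IsFiniteMeasure ν] {h : β → ℝ}
    (hh : MemLp h 2 ν) : (∫ s, |h s| ∂ν) ^ 2 ≤ ν.real univ * ∫ s, h s ^ 2 ∂ν := by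
  have h1 : Integrable (fun s => |h s|) ν := (hh.integrable one_le_two).abs
  have h2 : Integrable (fun s => h s ^ 2) ν := hh.integrable_sq
  -- Cauchy–Schwarz for `|h|` and `1`: the quadratic `t ↦ ∫ (|h| - t)²` is nonnegative
  have hquad : ∀ t : ℝ,
      0 ≤ ν.real univ * (t * t) + (-2 * ∫ s, |h s| ∂ν) * t + ∫ s, h s ^ 2 ∂ν := fun t => by
    calc 0 ≤ ∫ s, (|h s| - t) ^ 2 ∂ν := integral_nonneg fun s => sq_nonneg _
      _ = ∫ s, (h s ^ 2 - 2 * t * |h s| + t ^ 2) ∂ν := by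
          congr 1 with s; rw [sub_sq, sq_abs]; ring
      _ = _ := by
          have hlin : Integrable (fun s => h s ^ 2 - 2 * t * |h s|) ν := h2.sub (h1.const_mul _)
          rw [integral_add hlin (integrable_const _), integral_sub h2 (h1.const_mul _),
            integral_const_mul, integral_const, smul_eq_mul]
          ring
  have := discrim_le_zero hquad
  rw [discrim] at this
  linarith

theorem abs_integral_mul_le_of_nonneg_of_le {k h : β → ℝ} {kbar : ℝ} (hh : Integrable h ν)
    (hk0 : ∀ s, 0 ≤ k s) (hk : ∀ s, k s ≤ kbar) :
    |∫ s, k s * h s ∂ν| ≤ kbar * ∫ s, |h s| ∂ν := by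
  rw [← Real.norm_eq_abs, ← integral_const_mul kbar fun s => |h s|]
  refine norm_integral_le_of_norm_le (hh.abs.const_mul kbar) (.of_forall fun s => ?_)
  rw [norm_mul, Real.norm_of_nonneg (hk0 s), Real.norm_eq_abs]
  exact mul_le_mul_of_nonneg_right (hk s) (abs_nonneg _)

theorem integral_integral_mul_mul_le_of_symm [IsFiniteMeasure ν] {k : β → β → ℝ} {kbar : ℝ}
    {h : β → ℝ} (hk : Measurable (uncurry k)) (hk0 : ∀ s s', 0 ≤ k s s')
    (hk_le : ∀ s s', k s s' ≤ kbar) (hk_symm : ∀ s s', k s s' = k s' s) (hh : MemLp h 2 ν) :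
    ∫ s, (∫ s', k s s' * h s' ∂ν) * h s ∂ν ≤ ∫ s, (∫ s', k s s' ∂ν) * h s ^ 2 ∂ν := by
  set G : β × β → ℝ := fun z => k z.1 z.2 * h z.1 ^ 2
  have hh1 : Integrable h ν := hh.integrable one_le_two
  have hG : Integrable G (ν.prod ν) := by
    refine ((hh.integrable_sq.comp_fst ν).const_mul kbar).mono'
      (hk.aestronglyMeasurable.mul (hh.integrable_sq.aestronglyMeasurable.comp_fst))
      (.of_forall fun z => ?_)
    rw [norm_mul, Real.norm_of_nonneg (hk0 _ _), Real.norm_of_nonneg (sq_nonneg _)]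
    exact mul_le_mul_of_nonneg_right (hk_le _ _) (sq_nonneg _)
  have hGswap : Integrable (fun z => G z.swap) (ν.prod ν) := hG.swap
  have hP : Integrable (fun z : β × β => k z.1 z.2 * h z.2 * h z.1) (ν.prod ν) := by
    refine ((hh1.norm.mul_prod hh1.norm).const_mul kbar).mono'
      ((hk.aestronglyMeasurable.mul hh1.1.comp_snd).mul hh1.1.comp_fst)
      (.of_forall fun z => ?_)
    rw [norm_mul, norm_mul, Real.norm_of_nonneg (hk0 _ _), mul_assoc, mul_comm ‖h z.2‖]
    exact mul_le_mul_of_nonneg_right (hk_le _ _) (by positivity)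
  -- 2 k h(s) h(s') ≤ k h(s)² + k h(s')², and by symmetry of `k` the second term is `G ∘ swap`
  calc ∫ s, (∫ s', k s s' * h s' ∂ν) * h s ∂ν
      = ∫ z, k z.1 z.2 * h z.2 * h z.1 ∂(ν.prod ν) := by
        rw [integral_prod _ hP]; simp only [integral_mul_const]
    _ ≤ ∫ z, (G z + G z.swap) / 2 ∂(ν.prod ν) := by
        refine integral_mono hP ((hG.add hGswap).div_const 2) fun z => ?_
        simp only [G, Prod.fst_swap, Prod.snd_swap, hk_symm z.2 z.1]
        nlinarith [mul_nonneg (hk0 z.1 z.2) (sq_nonneg (h z.1 - h z.2))]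
    _ = ∫ z, G z ∂(ν.prod ν) := by
        rw [integral_div, integral_add hG hGswap, integral_prod_swap G]; ring
    _ = ∫ s, (∫ s', k s s' ∂ν) * h s ^ 2 ∂ν := by
        rw [integral_prod _ hG]; simp only [G, integral_mul_const]

variable {α : Type*} [MeasurableSpace α] {μ : Measure α}

noncomputable section

def scatteringCoeff (ν : Measure β) (K : α → β → β → ℝ) (r : α) (s : β) : ℝ :=
  ∫ s', K r s s' ∂ν

def scatteringOp (ν : Measure β) (K : α → β → β → ℝ) (φ : α → β → ℝ) (r : α) (s : β) : ℝ :=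
  ∫ s', K r s s' * φ r s' ∂ν

def collisionOp (ν : Measure β) (σt : α → ℝ) (K : α → β → β → ℝ) (φ : α → β → ℝ)
    (r : α) (s : β) : ℝ :=
  σt r * φ r s - scatteringOp ν K φ r s

end

section Product

variable [IsFiniteMeasure ν] {K : α → β → β → ℝ} {kbar : ℝ} {φ : α → β → ℝ}

theorem scatteringOp_congr_ae {ψ : α → β → ℝ} (h : uncurry φ =ᵐ[μ.prod ν] uncurry ψ) :
    uncurry (scatteringOp ν K φ) =ᵐ[μ.prod ν] uncurry (scatteringOp ν K ψ) := by
  filter_upwards [Measure.quasiMeasurePreserving_fst.ae (Measure.ae_ae_eq_of_ae_eq_uncurry h)]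
    with p hp
  exact integral_congr_ae (hp.mono fun s' hs' => by simp only [hs'])

theorem collisionOp_congr_ae {σt : α → ℝ} {ψ : α → β → ℝ}
    (h : uncurry φ =ᵐ[μ.prod ν] uncurry ψ) :
    uncurry (collisionOp ν σt K φ) =ᵐ[μ.prod ν] uncurry (collisionOp ν σt K ψ) := by
  filter_upwards [h, scatteringOp_congr_ae (K := K) h] with p h1 h2
  simp only [uncurry, collisionOp] at h1 h2 ⊢
  rw [h1, h2]

theorem ae_memLp_two_of_memLp_two_prod [SFinite μ] (hφm : Measurable (uncurry φ))
    (hφ : MemLp (uncurry φ) 2 (μ.prod ν)) : ∀ᵐ r ∂μ, MemLp (φ r) 2 ν := by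
  filter_upwards [hφ.integrable_sq.prod_right_ae] with r hr
  exact (memLp_two_iff_integrable_sq (hφm.comp measurable_prodMk_left).aestronglyMeasurable).2 hr

theorem measurable_scatteringCoeff (hK : Measurable fun q : α × β × β => K q.1 q.2.1 q.2.2) :
    Measurable (uncurry (scatteringCoeff ν K)) :=
  (hK.comp (f := fun q : (α × β) × β => (q.1.1, q.1.2, q.2)) (by fun_prop)).stronglyMeasurable
    |>.integral_prod_right' |>.measurable

theorem measurable_scatteringOp (hK : Measurable fun q : α × β × β => K q.1 q.2.1 q.2.2)
    (hφm : Measurable (uncurry φ)) : Measurable (uncurry (scatteringOp ν K φ)) :=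
  ((hK.comp (f := fun q : (α × β) × β => (q.1.1, q.1.2, q.2)) (by fun_prop)).mul
    (hφm.comp (f := fun q : (α × β) × β => (q.1.1, q.2)) (by fun_prop))).stronglyMeasurable
    |>.integral_prod_right' |>.measurable

theorem memLp_scatteringOp [SFinite μ] (hK : Measurable fun q : α × β × β => K q.1 q.2.1 q.2.2)
    (hKbd : ∀ᵐ r ∂μ, ∀ s s', 0 ≤ K r s s' ∧ K r s s' ≤ kbar) (hφm : Measurable (uncurry φ))
    (hφ : MemLp (uncurry φ) 2 (μ.prod ν)) : MemLp (uncurry (scatteringOp ν K φ)) 2 (μ.prod ν) := by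
  have hm := measurable_scatteringOp (ν := ν) hK hφm
  refine (memLp_two_iff_integrable_sq hm.aestronglyMeasurable).2 ?_
  have hQ : Integrable (fun p : α × β => ∫ s, φ p.1 s ^ 2 ∂ν) (μ.prod ν) :=
    hφ.integrable_sq.integral_prod_left.comp_fst ν
  refine (hQ.const_mul (kbar ^ 2 * ν.real univ)).mono' (hm.pow_const 2).aestronglyMeasurable ?_
  filter_upwards [Measure.quasiMeasurePreserving_fst.ae
    (hKbd.and (ae_memLp_two_of_memLp_two_prod hφm hφ))] with p ⟨hKp, hφp⟩
  have hbound := abs_integral_mul_le_of_nonneg_of_le (hφp.integrable one_le_two)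
    (fun s' => (hKp p.2 s').1) (fun s' => (hKp p.2 s').2)
  rw [Real.norm_of_nonneg (sq_nonneg _)]
  calc scatteringOp ν K φ p.1 p.2 ^ 2 ≤ (kbar * ∫ s, |φ p.1 s| ∂ν) ^ 2 := by
        rw [← sq_abs]; exact pow_le_pow_left₀ (abs_nonneg _) hbound 2
    _ = kbar ^ 2 * (∫ s, |φ p.1 s| ∂ν) ^ 2 := by ring
    _ ≤ kbar ^ 2 * (ν.real univ * ∫ s, φ p.1 s ^ 2 ∂ν) := by
        gcongr; exact sq_integral_abs_le_measureReal_univ_mul hφp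
    _ = kbar ^ 2 * ν.real univ * ∫ s, φ p.1 s ^ 2 ∂ν := by ring

theorem ae_abs_scatteringCoeff_le (hKbd : ∀ᵐ r ∂μ, ∀ s s', 0 ≤ K r s s' ∧ K r s s' ≤ kbar) :
    ∀ᵐ p ∂(μ.prod ν), |scatteringCoeff ν K p.1 p.2| ≤ kbar * ν.real univ := by
  filter_upwards [Measure.quasiMeasurePreserving_fst.ae hKbd] with p hKp
  rw [← Real.norm_eq_abs]
  refine norm_integral_le_of_norm_le_const (.of_forall fun s' => ?_)
  rw [Real.norm_of_nonneg (hKp p.2 s').1]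
  exact (hKp p.2 s').2

theorem integrable_scatteringCoeff_mul [SFinite μ]
    (hK : Measurable fun q : α × β × β => K q.1 q.2.1 q.2.2)
    (hKbd : ∀ᵐ r ∂μ, ∀ s s', 0 ≤ K r s s' ∧ K r s s' ≤ kbar) {f : α × β → ℝ}
    (hf : Integrable f (μ.prod ν)) :
    Integrable (fun p => scatteringCoeff ν K p.1 p.2 * f p) (μ.prod ν) :=
  hf.bdd_mul (measurable_scatteringCoeff hK).aestronglyMeasurable (ae_abs_scatteringCoeff_le hKbd)

theorem integral_scatteringOp_mul_le [SFinite μ]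
    (hK : Measurable fun q : α × β × β => K q.1 q.2.1 q.2.2)
    (hKbd : ∀ᵐ r ∂μ, ∀ s s', 0 ≤ K r s s' ∧ K r s s' ≤ kbar)
    (hK_symm : ∀ᵐ r ∂μ, ∀ s s', K r s s' = K r s' s) (hφm : Measurable (uncurry φ))
    (hφ : MemLp (uncurry φ) 2 (μ.prod ν)) :
    ∫ p, scatteringOp ν K φ p.1 p.2 * φ p.1 p.2 ∂(μ.prod ν) ≤
      ∫ p, scatteringCoeff ν K p.1 p.2 * φ p.1 p.2 ^ 2 ∂(μ.prod ν) := by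
  have hlhs : Integrable (fun p => scatteringOp ν K φ p.1 p.2 * φ p.1 p.2) (μ.prod ν) :=
    (memLp_scatteringOp hK hKbd hφm hφ).integrable_mul hφ
  have hrhs : Integrable (fun p => scatteringCoeff ν K p.1 p.2 * φ p.1 p.2 ^ 2) (μ.prod ν) :=
    integrable_scatteringCoeff_mul hK hKbd hφ.integrable_sq
  rw [integral_prod _ hlhs, integral_prod _ hrhs]
  refine integral_mono_ae hlhs.integral_prod_left hrhs.integral_prod_left ?_
  filter_upwards [hKbd, hK_symm, ae_memLp_two_of_memLp_two_prod hφm hφ] with r hKr hsymm hφr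
  exact integral_integral_mul_mul_le_of_symm
    (hK.comp (f := fun z : β × β => (r, z.1, z.2)) (by fun_prop))
    (fun s s' => (hKr s s').1) (fun s s' => (hKr s s').2) hsymm hφr

theorem memLp_collisionOp [SFinite μ] {σt : α → ℝ}
    (hK : Measurable fun q : α × β × β => K q.1 q.2.1 q.2.2)
    (hKbd : ∀ᵐ r ∂μ, ∀ s s', 0 ≤ K r s s' ∧ K r s s' ≤ kbar)
    (hσt : MemLp (fun p : α × β => σt p.1) ∞ (μ.prod ν)) (hφm : Measurable (uncurry φ))
    (hφ : MemLp (uncurry φ) 2 (μ.prod ν)) :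
    MemLp (uncurry (collisionOp ν σt K φ)) 2 (μ.prod ν) :=
  (hφ.mul' hσt).sub (memLp_scatteringOp hK hKbd hφm hφ)

theorem memLp_top_of_sub_scatteringCoeff_mem_Icc {σt : α → ℝ} {σalo σahi : ℝ}
    (hσt : AEStronglyMeasurable σt μ) (hKbd : ∀ᵐ r ∂μ, ∀ s s', 0 ≤ K r s s' ∧ K r s s' ≤ kbar)
    (hσa : ∀ᵐ r ∂μ, ∀ s, σt r - scatteringCoeff ν K r s ∈ Icc σalo σahi) :
    MemLp (fun p : α × β => σt p.1) ∞ (μ.prod ν) := by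
  refine memLp_top_of_bound hσt.comp_fst
    (max |σalo - kbar * ν.real univ| |σahi + kbar * ν.real univ|) ?_
  filter_upwards [Measure.quasiMeasurePreserving_fst.ae hσa, ae_abs_scatteringCoeff_le hKbd]
    with p hσap hS
  obtain ⟨hlo, hhi⟩ := hσap p.2
  obtain ⟨hS_lo, hS_hi⟩ := abs_le.1 hS
  exact abs_le_max_abs_abs (by linarith) (by linarith)

theorem integral_collisionOp_mul_ge [SFinite μ] {σt : α → ℝ} {σalo : ℝ}
    (hK : Measurable fun q : α × β × β => K q.1 q.2.1 q.2.2)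
    (hKbd : ∀ᵐ r ∂μ, ∀ s s', 0 ≤ K r s s' ∧ K r s s' ≤ kbar)
    (hK_symm : ∀ᵐ r ∂μ, ∀ s s', K r s s' = K r s' s)
    (hσt : MemLp (fun p : α × β => σt p.1) ∞ (μ.prod ν))
    (hσa : ∀ᵐ r ∂μ, ∀ s, σalo ≤ σt r - scatteringCoeff ν K r s) (hφm : Measurable (uncurry φ))
    (hφ : MemLp (uncurry φ) 2 (μ.prod ν)) :
    σalo * ∫ p, φ p.1 p.2 ^ 2 ∂(μ.prod ν) ≤
      ∫ p, collisionOp ν σt K φ p.1 p.2 * φ p.1 p.2 ∂(μ.prod ν) := by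
  have hσtφ : Integrable (fun p => σt p.1 * φ p.1 p.2 * φ p.1 p.2) (μ.prod ν) :=
    (hφ.mul' hσt : MemLp (fun p => σt p.1 * φ p.1 p.2) 2 _).integrable_mul hφ
  have hSφ : Integrable (fun p => scatteringCoeff ν K p.1 p.2 * φ p.1 p.2 ^ 2) (μ.prod ν) :=
    integrable_scatteringCoeff_mul hK hKbd hφ.integrable_sq
  have hKφ : Integrable (fun p => scatteringOp ν K φ p.1 p.2 * φ p.1 p.2) (μ.prod ν) :=
    (memLp_scatteringOp hK hKbd hφm hφ).integrable_mul hφ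
  calc σalo * ∫ p, φ p.1 p.2 ^ 2 ∂(μ.prod ν)
      ≤ ∫ p, (σt p.1 * φ p.1 p.2 * φ p.1 p.2 - scatteringCoeff ν K p.1 p.2 * φ p.1 p.2 ^ 2)
          ∂(μ.prod ν) := by
        rw [← integral_const_mul]
        refine integral_mono_ae (hφ.integrable_sq.const_mul σalo) (hσtφ.sub hSφ) ?_
        filter_upwards [Measure.quasiMeasurePreserving_fst.ae hσa] with p hp
        nlinarith [mul_le_mul_of_nonneg_right (hp p.2) (sq_nonneg (φ p.1 p.2))]
    _ ≤ ∫ p, (σt p.1 * φ p.1 p.2 * φ p.1 p.2 - scatteringOp ν K φ p.1 p.2 * φ p.1 p.2)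
          ∂(μ.prod ν) := by
        rw [integral_sub hσtφ hSφ, integral_sub hσtφ hKφ]
        gcongr 1
        exact integral_scatteringOp_mul_le hK hKbd hK_symm hφm hφ
    _ = ∫ p, collisionOp ν σt K φ p.1 p.2 * φ p.1 p.2 ∂(μ.prod ν) := by
        simp only [collisionOp, sub_mul]

theorem collisionOp_coercive [SFinite μ] {σt : α → ℝ} {σalo σahi : ℝ}
    (hK : Measurable fun q : α × β × β => K q.1 q.2.1 q.2.2)
    (hKbd : ∀ᵐ r ∂μ, ∀ s s', 0 ≤ K r s s' ∧ K r s s' ≤ kbar)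
    (hK_symm : ∀ᵐ r ∂μ, ∀ s s', K r s s' = K r s' s) (hσt : AEStronglyMeasurable σt μ)
    (hσa : ∀ᵐ r ∂μ, ∀ s, σt r - scatteringCoeff ν K r s ∈ Icc σalo σahi)
    (hφ : MemLp (uncurry φ) 2 (μ.prod ν)) :
    MemLp (uncurry (collisionOp ν σt K φ)) 2 (μ.prod ν) ∧
      σalo * ∫ p, φ p.1 p.2 ^ 2 ∂(μ.prod ν) ≤
        ∫ p, collisionOp ν σt K φ p.1 p.2 * φ p.1 p.2 ∂(μ.prod ν) := by
  set ψ : α → β → ℝ := curry (hφ.1.mk _)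
  have hψm : Measurable (uncurry ψ) := hφ.1.stronglyMeasurable_mk.measurable
  have hφψ : uncurry φ =ᵐ[μ.prod ν] uncurry ψ := hφ.1.ae_eq_mk
  have hψ : MemLp (uncurry ψ) 2 (μ.prod ν) := hφ.ae_eq hφψ
  have hC := collisionOp_congr_ae (σt := σt) (K := K) hφψ
  have hσt_top := memLp_top_of_sub_scatteringCoeff_mem_Icc hσt hKbd hσa
  refine ⟨(memLp_collisionOp hK hKbd hσt_top hψm hψ).ae_eq hC.symm, ?_⟩
  calc σalo * ∫ p, φ p.1 p.2 ^ 2 ∂(μ.prod ν) = σalo * ∫ p, ψ p.1 p.2 ^ 2 ∂(μ.prod ν) := by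
        congr 1; exact integral_congr_ae (hφψ.fun_comp (· ^ 2))
    _ ≤ ∫ p, collisionOp ν σt K ψ p.1 p.2 * ψ p.1 p.2 ∂(μ.prod ν) :=
        integral_collisionOp_mul_ge hK hKbd hK_symm hσt_top (hσa.mono fun r hr s => (hr s).1)
          hψm hψ
    _ = ∫ p, collisionOp ν σt K φ p.1 p.2 * φ p.1 p.2 ∂(μ.prod ν) :=
        integral_congr_ae (hC.mul hφψ).symm

end Product

instance : IsFiniteMeasure sphMeasure := by
  unfold sphMeasure; infer_instance

theorem real_inner_mem_Icc_of_mem_sphere (s s' : Sph) :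
    ⟪(s : E3), (s' : E3)⟫ ∈ Icc (-1 : ℝ) 1 := by
  have h := abs_real_inner_le_norm (s : E3) (s' : E3)
  rw [mem_sphere_zero_iff_norm.1 s.2, mem_sphere_zero_iff_norm.1 s'.2, one_mul] at h
  exact abs_le.1 h

theorem stmt_10_general
    (R : Set E3) (hR : MeasurableSet R)
    (k : E3 → ℝ → ℝ) (σt : E3 → ℝ)
    (hk_meas : Measurable (Function.uncurry k)) (hσt_meas : Measurable σt)
    (σs σa : E3 → ℝ)
    (hσs : ∀ r ∈ R, ∀ s : Sph, σs r = ∫ s' : Sph, k r ⟪(s : E3), (s' : E3)⟫ ∂sphMeasure)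
    (hσa : ∀ r : E3, σa r = σt r - σs r)
    (kbar σalo σahi : ℝ)
    (hk : ∀ r ∈ R, ∀ μ ∈ Set.Icc (-1 : ℝ) 1, 0 ≤ k r μ ∧ k r μ ≤ kbar)
    (hσab : ∀ r ∈ R, σalo ≤ σa r ∧ σa r ≤ σahi)
    (φ : E3 → Sph → ℝ)
    (hφ : MemLp (fun p : E3 × Sph => φ p.1 p.2) 2
      (((volume : Measure E3).restrict R).prod sphMeasure)) :
    MemLp (fun p : E3 × Sph =>
        σt p.1 * φ p.1 p.2 - ∫ s' : Sph, k p.1 ⟪(p.2 : E3), (s' : E3)⟫ * φ p.1 s' ∂sphMeasure) 2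
      (((volume : Measure E3).restrict R).prod sphMeasure) ∧
    σalo * (∫ p : E3 × Sph, (φ p.1 p.2) ^ 2
        ∂(((volume : Measure E3).restrict R).prod sphMeasure)) ≤
      ∫ p : E3 × Sph,
        (σt p.1 * φ p.1 p.2 -
            ∫ s' : Sph, k p.1 ⟪(p.2 : E3), (s' : E3)⟫ * φ p.1 s' ∂sphMeasure) * φ p.1 p.2
        ∂(((volume : Measure E3).restrict R).prod sphMeasure) := by
  have hR_ae : ∀ᵐ r ∂(volume : Measure E3).restrict R, r ∈ R := ae_restrict_mem hR
  refine collisionOp_coercive (K := fun r (s s' : Sph) => k r ⟪(s : E3), (s' : E3)⟫)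
    (kbar := kbar) (σahi := σahi) ?_ ?_ ?_ hσt_meas.aestronglyMeasurable ?_ hφ
  · exact hk_meas.comp (f := fun q : E3 × Sph × Sph => (q.1, ⟪(q.2.1 : E3), (q.2.2 : E3)⟫))
      (by fun_prop)
  · filter_upwards [hR_ae] with r hr s s'
    exact hk r hr _ (real_inner_mem_Icc_of_mem_sphere s s')
  · exact .of_forall fun r s s' => by rw [real_inner_comm]
  · filter_upwards [hR_ae] with r hr s
    rw [scatteringCoeff, ← hσs r hr s, ← hσa r]
    exact hσab r hr

/-- Coercivity of the collision operator (Cφ)(r,s) = σₜ(r)φ(r,s) − ∫ k(r,s·s')φ(r,s')dσ(s')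
on L²(D), D = R × S²: Cφ ∈ L²(D) and (Cφ, φ) ≥ σ̲ₐ ‖φ‖²_{L²(D)}. -/
theorem stmt_10
    (R : Set E3) (hR : MeasurableSet R)
    (k : E3 → ℝ → ℝ) (σt : E3 → ℝ)
    (hk_meas : Measurable (Function.uncurry k)) (hσt_meas : Measurable σt)
    (σs σa : E3 → ℝ)
    (hσs : ∀ r ∈ R, ∀ s : Sph, σs r = ∫ s' : Sph, k r ⟪(s : E3), (s' : E3)⟫ ∂sphMeasure)
    (hσa : ∀ r : E3, σa r = σt r - σs r)
    (kbar σalo σahi : ℝ) (hkbar : 0 ≤ kbar)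
    (hk : ∀ r ∈ R, ∀ μ ∈ Set.Icc (-1 : ℝ) 1, 0 ≤ k r μ ∧ k r μ ≤ kbar)
    (hσa0 : 0 < σalo) (hσaa : σalo ≤ σahi) (hσab : ∀ r ∈ R, σalo ≤ σa r ∧ σa r ≤ σahi)
    (φ : E3 → Sph → ℝ)
    (hφ : MemLp (fun p : E3 × Sph => φ p.1 p.2) 2
      (((volume : Measure E3).restrict R).prod sphMeasure)) :
    MemLp (fun p : E3 × Sph =>
        σt p.1 * φ p.1 p.2 - ∫ s' : Sph, k p.1 ⟪(p.2 : E3), (s' : E3)⟫ * φ p.1 s' ∂sphMeasure) 2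
      (((volume : Measure E3).restrict R).prod sphMeasure) ∧
    σalo * (∫ p : E3 × Sph, (φ p.1 p.2) ^ 2
        ∂(((volume : Measure E3).restrict R).prod sphMeasure)) ≤
      ∫ p : E3 × Sph,
        (σt p.1 * φ p.1 p.2 -
            ∫ s' : Sph, k p.1 ⟪(p.2 : E3), (s' : E3)⟫ * φ p.1 s' ∂sphMeasure) * φ p.1 p.2
        ∂(((volume : Measure E3).restrict R).prod sphMeasure) :=
  stmt_10_general R hR k σt hk_meas hσt_meas σs σa hσs hσa kbar σalo σahi hk hσab φ hφ
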